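/- Let R be a commutative ring, a ∈ R^* a unit with 1 − a ∈ R^*, and b ∈ R. Then in K^M_2(R[ε]) one has 2·{1 + (b/a)·ε, 1 + (b/(1−a))·ε} = 0. -/

import Mathlib

open TrivSqZeroExt

/-- The relations defining the Milnor K-group of a commutative ring `S`:
multilinearity relations and Steinberg relations (a generator `r₁ ⊗ … ⊗ r_n` with some
pair of consecutive entries summing to `1`). -/
def milnorRelSet (S : Type*) [CommRing S] (n : ℕ) : Set (FreeAbelianGroup (Fin n → Sˣ)) :=
  {x | ∃ (f : Fin n → Sˣ) (i : Fin n) (u v : Sˣ),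
      x = FreeAbelianGroup.of (Function.update f i (u * v))
        - FreeAbelianGroup.of (Function.update f i u)
        - FreeAbelianGroup.of (Function.update f i v)} ∪
  {x | ∃ (f : Fin n → Sˣ) (i j : Fin n), (i : ℕ) + 1 = (j : ℕ) ∧
      ((f i : S) + (f j : S) = 1) ∧ x = FreeAbelianGroup.of f}

/-- The `n`-th Milnor K-group of a commutative ring `S`: the quotient of `(Sˣ)^{⊗ n}`
(presented as the free abelian group on `n`-tuples of units, modulo multilinearity)
by the Steinberg relations. -/
def MilnorK (S : Type*) [CommRing S] (n : ℕ) : Type _ :=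
  FreeAbelianGroup (Fin n → Sˣ) ⧸ AddSubgroup.closure (milnorRelSet S n)

instance (S : Type*) [CommRing S] (n : ℕ) : AddCommGroup (MilnorK S n) :=
  QuotientAddGroup.Quotient.addCommGroup _

/-- The Milnor symbol `{r₁, …, r_n}`. -/
def milnorSymbol {S : Type*} [CommRing S] {n : ℕ} (f : Fin n → Sˣ) : MilnorK S n :=
  QuotientAddGroup.mk (FreeAbelianGroup.of f)

/-- Functoriality of Milnor K-groups in ring homomorphisms. -/
def MilnorK.map {S T : Type*} [CommRing S] [CommRing T] (φ : S →+* T) (n : ℕ) :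
    MilnorK S n →+ MilnorK T n := by
  refine QuotientAddGroup.lift _
    ((QuotientAddGroup.mk' (AddSubgroup.closure (milnorRelSet T n))).comp
      (FreeAbelianGroup.map (fun f => (Units.map (φ : S →* T)) ∘ f))) ?_
  intro x hx
  revert x hx
  rw [← SetLike.le_def, AddSubgroup.closure_le]
  rintro x (⟨f, i, u, v, rfl⟩ | ⟨f, i, j, hij, hsum, rfl⟩) <;>
    simp only [SetLike.mem_coe, AddMonoidHom.mem_ker, map_sub]
  · show milnorSymbol (Units.map (φ : S →* T) ∘ Function.update f i (u * v))
      - milnorSymbol (Units.map (φ : S →* T) ∘ Function.update f i u)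
      - milnorSymbol (Units.map (φ : S →* T) ∘ Function.update f i v) = (0 : MilnorK T n)
    unfold milnorSymbol
    change @Eq (FreeAbelianGroup (Fin n → Tˣ) ⧸ AddSubgroup.closure (milnorRelSet T n))
      (QuotientAddGroup.mk (s := AddSubgroup.closure (milnorRelSet T n)) _ - QuotientAddGroup.mk (s := AddSubgroup.closure (milnorRelSet T n)) _ - QuotientAddGroup.mk (s := AddSubgroup.closure (milnorRelSet T n)) _) 0
    rw [← QuotientAddGroup.mk_sub, ← QuotientAddGroup.mk_sub, QuotientAddGroup.eq_zero_iff]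
    refine AddSubgroup.subset_closure (Or.inl ⟨Units.map (φ : S →* T) ∘ f, i,
      Units.map (φ : S →* T) u, Units.map (φ : S →* T) v, ?_⟩)
    simp [Function.comp_update]
  · show milnorSymbol (Units.map (φ : S →* T) ∘ f) = (0 : MilnorK T n)
    unfold milnorSymbol
    change @Eq (FreeAbelianGroup (Fin n → Tˣ) ⧸ AddSubgroup.closure (milnorRelSet T n))
      (QuotientAddGroup.mk (s := AddSubgroup.closure (milnorRelSet T n)) _) 0
    rw [QuotientAddGroup.eq_zero_iff]
    refine AddSubgroup.subset_closure (Or.inr ⟨Units.map (φ : S →* T) ∘ f, i, j, hij, ?_, rfl⟩)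
    simp only [Function.comp_apply, Units.coe_map, MonoidHom.coe_coe]
    rw [← map_add, hsum, map_one]

/-- The unit `1 + r·ε` of the dual numbers, with inverse `1 - r·ε`. -/
def oneAddEps (R : Type*) [CommRing R] (r : R) : (DualNumber R)ˣ where
  val := 1 + inr r
  inv := 1 - inr r
  val_inv := by
    have h : (inr r : DualNumber R) * inr r = 0 := inr_mul_inr R r r
    ring_nf
    simp [pow_two, h]
  inv_val := by
    have h : (inr r : DualNumber R) * inr r = 0 := inr_mul_inr R r r
    ring_nf
    simp [pow_two, h]

/-- The `R`-algebra endomorphism `σ_a` of the dual numbers sending `ε` to `a·ε`. -/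
def epsScale (R : Type*) [CommRing R] (a : R) : DualNumber R →+* DualNumber R where
  toFun x := inl x.fst + inr (a * x.snd)
  map_one' := by simp
  map_mul' x y := by
    ext
    · simp
    · simp [snd_mul, smul_eq_mul, mul_comm, mul_add]
      ring
  map_zero' := by simp
  map_add' x y := by ext <;> simp [mul_add]


/-! Put `x = b/a`, `y = b/(1-a)` and `e = 1 + xε`, `f = 1 + yε`, so that `a x = (1-a) y`.
Then `a e + (1-a) f⁻¹ = 1` and `a e⁻¹ + (1-a) f = 1`. Expanding the two Steinberg relations
`{a e, (1-a) f⁻¹} = 0` and `{a e⁻¹, (1-a) f} = 0` bilinearly, and using `{a, 1-a} = 0`, the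
mixed terms `±{a, f}` and `±{e, 1-a}` cancel in the sum, which leaves `-2 {e, f} = 0`. -/

section MilnorSymbol

variable {S : Type*} [CommRing S]

lemma mk_eq_zero_of_mem_milnorRelSet {n : ℕ} {x : FreeAbelianGroup (Fin n → Sˣ)}
    (hx : x ∈ milnorRelSet S n) : (QuotientAddGroup.mk x : MilnorK S n) = 0 :=
  (QuotientAddGroup.eq_zero_iff x).2 (AddSubgroup.subset_closure hx)

lemma milnorSymbol_update_mul {n : ℕ} (f : Fin n → Sˣ) (i : Fin n) (u v : Sˣ) :
    milnorSymbol (Function.update f i (u * v)) =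
      milnorSymbol (Function.update f i u) + milnorSymbol (Function.update f i v) := by
  have h := mk_eq_zero_of_mem_milnorRelSet (Or.inl ⟨f, i, u, v, rfl⟩)
  rwa [QuotientAddGroup.mk_sub, QuotientAddGroup.mk_sub, sub_sub, sub_eq_zero] at h

lemma milnorSymbol_eq_zero_of_add_eq_one {n : ℕ} (f : Fin n → Sˣ) {i j : Fin n}
    (hij : (i : ℕ) + 1 = j) (h : (f i : S) + f j = 1) : milnorSymbol f = 0 :=
  mk_eq_zero_of_mem_milnorRelSet (Or.inr ⟨f, i, j, hij, h, rfl⟩)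

lemma milnorSymbol_mul_left (u v w : Sˣ) :
    milnorSymbol ![u * v, w] = milnorSymbol ![u, w] + milnorSymbol ![v, w] := by
  have h := milnorSymbol_update_mul ![u, w] 0 u v
  have hupd (z : Sˣ) : Function.update ![u, w] 0 z = ![z, w] := by ext i; fin_cases i <;> rfl
  rwa [hupd, hupd, hupd] at h

lemma milnorSymbol_mul_right (u v w : Sˣ) :
    milnorSymbol ![w, u * v] = milnorSymbol ![w, u] + milnorSymbol ![w, v] := by
  have h := milnorSymbol_update_mul ![w, u] 1 u v
  have hupd (z : Sˣ) : Function.update ![w, u] 1 z = ![w, z] := by ext i; fin_cases i <;> rfl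
  rwa [hupd, hupd, hupd] at h

lemma milnorSymbol_steinberg {u v : Sˣ} (h : (u : S) + v = 1) : milnorSymbol ![u, v] = 0 :=
  milnorSymbol_eq_zero_of_add_eq_one ![u, v] (i := 0) (j := 1) rfl h

lemma milnorSymbol_inv_left (u w : Sˣ) : milnorSymbol ![u⁻¹, w] = -milnorSymbol ![u, w] := by
  have h := milnorSymbol_mul_left u u⁻¹ w
  have h₁ := milnorSymbol_mul_left 1 1 w
  rw [mul_one, left_eq_add] at h₁
  rw [mul_inv_cancel, h₁] at h
  exact eq_neg_of_add_eq_zero_right h.symm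

lemma milnorSymbol_inv_right (u w : Sˣ) : milnorSymbol ![w, u⁻¹] = -milnorSymbol ![w, u] := by
  have h := milnorSymbol_mul_right u u⁻¹ w
  have h₁ := milnorSymbol_mul_right 1 1 w
  rw [mul_one, left_eq_add] at h₁
  rw [mul_inv_cancel, h₁] at h
  exact eq_neg_of_add_eq_zero_right h.symm

theorem two_zsmul_milnorSymbol_eq_zero_of_steinberg {p q e f : Sˣ} (hpq : (p : S) + q = 1)
    (h₁ : ((p * e : Sˣ) : S) + (q * f⁻¹ : Sˣ) = 1) (h₂ : ((p * e⁻¹ : Sˣ) : S) + (q * f : Sˣ) = 1) :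
    (2 : ℤ) • milnorSymbol ![e, f] = 0 := by
  have k₁ := milnorSymbol_steinberg h₁
  have k₂ := milnorSymbol_steinberg h₂
  simp only [milnorSymbol_mul_left, milnorSymbol_mul_right, milnorSymbol_inv_left,
    milnorSymbol_inv_right, milnorSymbol_steinberg hpq] at k₁ k₂
  linear_combination (norm := module) -k₁ - k₂

end MilnorSymbol

section DualNumber

variable {R : Type*} [CommRing R]

def inlUnit (a : Rˣ) : (DualNumber R)ˣ :=
  Units.map (inlHom R R : R →* DualNumber R) a

@[simp]
lemma coe_inlUnit (a : Rˣ) : (inlUnit a : DualNumber R) = inl (a : R) := rfl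

lemma oneAddEps_inv (r : R) : (oneAddEps R r)⁻¹ = oneAddEps R (-r) := by
  apply Units.ext
  show (1 - inr r : DualNumber R) = 1 + inr (-r)
  rw [inr_neg, sub_eq_add_neg]

lemma inl_mul_oneAddEps_add_inl_mul_oneAddEps (a u : Rˣ) (hau : (a : R) + u = 1) {x y : R}
    (hxy : a * x + u * y = 0) :
    ((inlUnit a * oneAddEps R x : (DualNumber R)ˣ) : DualNumber R)
      + (inlUnit u * oneAddEps R y : (DualNumber R)ˣ) = 1 := by
  show (inl (a : R) * (1 + inr x) : DualNumber R) + inl (u : R) * (1 + inr y) = 1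
  ext <;> simp [hau, hxy]

end DualNumber

/-- for a unit `a` with `1 - a` a unit (witnessed by the unit `u` with
`↑u = 1 - a`) and any `b ∈ R`, one has `2·{1 + (b/a)ε, 1 + (b/(1−a))ε} = 0` in
`K^M_2(R[ε])`. -/
theorem stmt_11 (R : Type*) [CommRing R] (a u : Rˣ) (hu : (u : R) = 1 - (a : R)) (b : R) :
    (2 : ℤ) • milnorSymbol ![oneAddEps R (b * ((a⁻¹ : Rˣ) : R)),
        oneAddEps R (b * ((u⁻¹ : Rˣ) : R))] = (0 : MilnorK (DualNumber R) 2) := by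
  have hau : (a : R) + u = 1 := by rw [hu, add_sub_cancel]
  refine two_zsmul_milnorSymbol_eq_zero_of_steinberg (p := inlUnit a)
    (q := inlUnit u) ?_ ?_ ?_
  · simp [← inl_add, hau]
  · rw [oneAddEps_inv]
    exact inl_mul_oneAddEps_add_inl_mul_oneAddEps a u hau
      (by simp [mul_left_comm (a : R), mul_left_comm (u : R)])
  · rw [oneAddEps_inv]
    exact inl_mul_oneAddEps_add_inl_mul_oneAddEps a u hau
      (by simp [mul_left_comm (a : R), mul_left_comm (u : R)])
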